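/- arXiv:2202.11306 — 2 statements merged into one kernel-verified Lean document; each statement's English description precedes it below -/
import Mathlib

section
/- For n ≥ 1 and 1 ≤ k ≤ n, the Stirling number of the second kind satisfies S₂(n,k) = (1/k!) ∑_{j=1}^{k} C(n-j, k-j) · A(n, j-1), where A(n,j) are the Eulerian numbers. -/
open Polynomial Finset

lemma aux_G0 (b r : ℕ) (hrb : r ≤ b) :
    ∑ t ∈ range (r + 1), (-1 : ℤ) ^ t * (b.choose t : ℤ) * ((b - t).choose (r - t) : ℤ)
      = if r = 0 then 1 else 0 := by
  have key : ∀ t ∈ range (r + 1),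
      (-1 : ℤ) ^ t * (b.choose t : ℤ) * ((b - t).choose (r - t) : ℤ)
        = (b.choose r : ℤ) * ((-1 : ℤ) ^ t * (r.choose t : ℤ)) := by
    intro t ht
    rw [mem_range] at ht
    have h1 : b.choose r * r.choose t = b.choose t * (b - t).choose (r - t) :=
      Nat.choose_mul (n := b) (Nat.lt_succ_iff.mp ht)
    have h2 := congrArg (Nat.cast : ℕ → ℤ) h1
    push_cast at h2
    rw [mul_assoc, ← h2]; ring
  rw [Finset.sum_congr rfl key, ← Finset.mul_sum, Int.alternating_sum_range_choose]
  split_ifs with h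
  · subst h; simp
  · simp

lemma aux_split (m b r : ℕ) :
    ∑ t ∈ range (r + 1), (-1 : ℤ) ^ t * ((m + 1).choose t : ℤ) * ((b - t).choose (r - t) : ℤ)
      = (∑ t ∈ range (r + 1), (-1 : ℤ) ^ t * (m.choose t : ℤ) * ((b - t).choose (r - t) : ℤ))
        - ∑ t ∈ range r, (-1 : ℤ) ^ t * (m.choose t : ℤ) * (((b - 1) - t).choose ((r - 1) - t) : ℤ) := by
  rw [Finset.sum_range_succ' (fun t => (-1 : ℤ) ^ t * ((m + 1).choose t : ℤ) * ((b - t).choose (r - t) : ℤ)),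
      Finset.sum_range_succ' (fun t => (-1 : ℤ) ^ t * (m.choose t : ℤ) * ((b - t).choose (r - t) : ℤ))]
  have hpascal : ∀ t, ((m + 1).choose (t + 1) : ℤ) = (m.choose t : ℤ) + (m.choose (t + 1) : ℤ) := by
    intro t; exact_mod_cast congrArg (Nat.cast : ℕ → ℤ) (Nat.choose_succ_succ m t)
  have hterm : ∀ t ∈ range r,
      (-1 : ℤ) ^ (t + 1) * ((m + 1).choose (t + 1) : ℤ) * ((b - (t + 1)).choose (r - (t + 1)) : ℤ)
        = (-1 : ℤ) ^ (t + 1) * (m.choose (t + 1) : ℤ) * ((b - (t + 1)).choose (r - (t + 1)) : ℤ)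
          - (-1 : ℤ) ^ t * (m.choose t : ℤ) * (((b - 1) - t).choose ((r - 1) - t) : ℤ) := by
    intro t ht
    have e1 : b - (t + 1) = (b - 1) - t := by omega
    have e2 : r - (t + 1) = (r - 1) - t := by omega
    rw [hpascal t, e1, e2]; ring
  rw [Finset.sum_congr rfl hterm, Finset.sum_sub_distrib]
  simp only [Nat.choose_zero_right, pow_zero, Nat.cast_one, mul_one, one_mul]
  ring

lemma aux_G (d : ℕ) : ∀ r b : ℕ, r ≤ b →
    ∑ t ∈ range (r + 1), (-1 : ℤ) ^ t * ((b + d + 1).choose t : ℤ) * ((b - t).choose (r - t) : ℤ)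
      = (-1 : ℤ) ^ r * ((d + r).choose r : ℤ) := by
  induction d with
  | zero =>
    intro r
    induction r with
    | zero => intro b _; simp
    | succ r ihr =>
      intro b hrb
      have hb : b + 0 + 1 = b + 1 := by ring
      rw [hb, aux_split b b (r + 1)]
      have h1 := aux_G0 b (r + 1) hrb
      rw [if_neg (Nat.succ_ne_zero r)] at h1
      rw [h1]
      have h2 := ihr (b - 1) (by omega)
      have hb2 : b - 1 + 0 + 1 = b := by omega
      rw [hb2] at h2
      simp only [Nat.add_succ_sub_one, Nat.add_zero] at *
      rw [h2]
      simp [pow_succ]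
  | succ d ihd =>
    intro r
    induction r with
    | zero => intro b _; simp
    | succ r ihr =>
      intro b hrb
      have hb : b + (d + 1) + 1 = (b + d + 1) + 1 := by ring
      rw [hb, aux_split (b + d + 1) b (r + 1)]
      rw [ihd (r + 1) b hrb]
      have h2 := ihr (b - 1) (by omega)
      have hb2 : b - 1 + (d + 1) + 1 = b + d + 1 := by omega
      rw [hb2] at h2
      simp only [Nat.add_succ_sub_one, Nat.add_zero] at *
      rw [h2]
      have hpn : (d + 1 + (r + 1)).choose (r + 1)
          = (d + (r + 1)).choose (r + 1) + (d + 1 + r).choose r := by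
        rw [show d + 1 + (r + 1) = (d + r + 1) + 1 by ring, Nat.choose_succ_succ,
          show d + r + 1 = d + (r + 1) by ring, Nat.add_comm]
        congr 2
        omega
      have hp : ((d + 1 + (r + 1)).choose (r + 1) : ℤ)
          = ((d + (r + 1)).choose (r + 1) : ℤ) + ((d + 1 + r).choose r : ℤ) := by
        exact_mod_cast congrArg (Nat.cast : ℕ → ℤ) hpn
      rw [hp]; ring

lemma aux_alt (N : ℕ) :
    ∑ s ∈ range (N + 1), (-1 : ℚ) ^ (N - s) * (N.choose s : ℚ) = if N = 0 then 1 else 0 := by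
  have hZ := Int.alternating_sum_range_choose (n := N)
  have hQ : ∑ s ∈ range (N + 1), (-1 : ℚ) ^ s * (N.choose s : ℚ)
      = if N = 0 then 1 else 0 := by
    have := congrArg (Int.cast : ℤ → ℚ) hZ
    push_cast at this
    split_ifs at this ⊢ with h <;> exact_mod_cast this
  have key : ∀ s ∈ range (N + 1),
      (-1 : ℚ) ^ (N - s) * (N.choose s : ℚ) = (-1 : ℚ) ^ N * ((-1 : ℚ) ^ s * (N.choose s : ℚ)) := by
    intro s hs
    rw [mem_range] at hs
    have h1 : (-1 : ℚ) ^ N = (-1 : ℚ) ^ (N - s) * (-1 : ℚ) ^ s := by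
      rw [← pow_add]; congr 1; omega
    rw [h1]
    have h2 : (-1 : ℚ) ^ s * (-1 : ℚ) ^ s = 1 := by
      rw [← pow_add, show s + s = 2 * s by ring, pow_mul]; norm_num
    calc (-1 : ℚ) ^ (N - s) * (N.choose s : ℚ)
        = (-1 : ℚ) ^ (N - s) * ((-1 : ℚ) ^ s * (-1 : ℚ) ^ s) * (N.choose s : ℚ) := by rw [h2]; ring
      _ = (-1 : ℚ) ^ (N - s) * (-1 : ℚ) ^ s * ((-1 : ℚ) ^ s * (N.choose s : ℚ)) := by ring
  rw [Finset.sum_congr rfl key, ← Finset.mul_sum, hQ]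
  split_ifs with h
  · subst h; simp
  · simp

lemma aux_inv (k j : ℕ) :
    ∑ m ∈ range (k + 1), (-1 : ℚ) ^ (k - m) * (k.choose m : ℚ) * (m.choose j : ℚ)
      = if j = k then 1 else 0 := by
  rcases le_or_gt j k with hjk | hjk
  · rw [range_eq_Ico, ← Finset.sum_Ico_consecutive _ (Nat.zero_le j) (by omega : j ≤ k + 1)]
    have h1 : ∑ m ∈ Finset.Ico 0 j, (-1 : ℚ) ^ (k - m) * (k.choose m : ℚ) * (m.choose j : ℚ) = 0 := by
      apply Finset.sum_eq_zero
      intro m hm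
      rw [Finset.mem_Ico] at hm
      rw [Nat.choose_eq_zero_of_lt hm.2, Nat.cast_zero, mul_zero]
    rw [h1, zero_add, Finset.sum_Ico_eq_sum_range, show k + 1 - j = (k - j) + 1 by omega]
    have hterm : ∀ s ∈ range ((k - j) + 1),
        (-1 : ℚ) ^ (k - (j + s)) * (k.choose (j + s) : ℚ) * ((j + s).choose j : ℚ)
          = (k.choose j : ℚ) * ((-1 : ℚ) ^ ((k - j) - s) * ((k - j).choose s : ℚ)) := by
      intro s hs
      rw [mem_range] at hs
      have h2 : k.choose (j + s) * (j + s).choose j = k.choose j * (k - j).choose s := by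
        have h := Nat.choose_mul (n := k) (Nat.le_add_right j s)
        rwa [Nat.add_sub_cancel_left] at h
      have h3 : k - (j + s) = (k - j) - s := by omega
      have h4 := congrArg (Nat.cast : ℕ → ℚ) h2
      push_cast at h4
      rw [h3, mul_assoc, h4]; ring
    rw [Finset.sum_congr rfl hterm, ← Finset.mul_sum, aux_alt (k - j)]
    by_cases h : j = k
    · subst h; simp
    · rw [if_neg (by omega : ¬ k - j = 0), if_neg h, mul_zero]
  · rw [if_neg (by omega : ¬ j = k)]
    apply Finset.sum_eq_zero
    intro m hm
    rw [mem_range] at hm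
    rw [Nat.choose_eq_zero_of_lt (by omega : m < j), Nat.cast_zero, mul_zero]

lemma aux_main (n k : ℕ) (hn : 1 ≤ n) (hk1 : 1 ≤ k) (hk : k ≤ n) :
    ∑ j ∈ Finset.Icc 1 k, ((n - j).choose (k - j) : ℤ) *
        ∑ i ∈ range j, (-1 : ℤ) ^ i * ((n + 1).choose i : ℤ) * ((j - i : ℕ) : ℤ) ^ n
      = ∑ m ∈ range (k + 1), (-1 : ℤ) ^ (k - m) * (k.choose m : ℤ) * (m : ℤ) ^ n := by
  have stepA : ∀ j ∈ Finset.Icc 1 k,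
      ((n - j).choose (k - j) : ℤ) *
          ∑ i ∈ range j, (-1 : ℤ) ^ i * ((n + 1).choose i : ℤ) * ((j - i : ℕ) : ℤ) ^ n
        = ∑ i ∈ range j, ((n - j).choose (k - j) : ℤ) *
            ((-1 : ℤ) ^ i * ((n + 1).choose i : ℤ) * ((j - i : ℕ) : ℤ) ^ n) :=
    fun j _ => Finset.mul_sum _ _ _
  rw [Finset.sum_congr rfl stepA]
  have mid : ∑ m ∈ Finset.Icc 1 k, ∑ t ∈ range (k - m + 1),
        (-1 : ℤ) ^ t * ((n + 1).choose t : ℤ) * ((n - m - t).choose (k - m - t) : ℤ) * (m : ℤ) ^ n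
      = ∑ m ∈ range (k + 1), (-1 : ℤ) ^ (k - m) * (k.choose m : ℤ) * (m : ℤ) ^ n := by
    have hin : ∀ m ∈ Finset.Icc 1 k,
        ∑ t ∈ range (k - m + 1),
            (-1 : ℤ) ^ t * ((n + 1).choose t : ℤ) * ((n - m - t).choose (k - m - t) : ℤ) * (m : ℤ) ^ n
          = (-1 : ℤ) ^ (k - m) * (k.choose m : ℤ) * (m : ℤ) ^ n := by
      intro m hm
      rw [Finset.mem_Icc] at hm
      have hG := aux_G m (k - m) (n - m) (by omega)
      rw [show n - m + m + 1 = n + 1 by omega] at hG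
      rw [← Finset.sum_mul, hG, show m + (k - m) = k by omega, Nat.choose_symm hm.2]
    rw [Finset.sum_congr rfl hin]
    apply Finset.sum_subset
    · intro m hm; rw [Finset.mem_Icc] at hm; rw [mem_range]; omega
    · intro m hm hm'
      rw [mem_range] at hm; rw [Finset.mem_Icc] at hm'
      have : m = 0 := by omega
      subst this
      rw [Nat.cast_zero, zero_pow (by omega : n ≠ 0), mul_zero]
  rw [← mid, Finset.sum_sigma', Finset.sum_sigma']
  apply Finset.sum_nbij' (fun p => (⟨p.1 - p.2, p.2⟩ : Σ _ : ℕ, ℕ))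
      (fun q => (⟨q.1 + q.2, q.2⟩ : Σ _ : ℕ, ℕ))
  · intro p hp
    simp only [Finset.mem_sigma, Finset.mem_Icc, mem_range] at hp ⊢
    omega
  · intro q hq
    simp only [Finset.mem_sigma, Finset.mem_Icc, mem_range] at hq ⊢
    omega
  · intro p hp
    rw [Finset.mem_sigma, Finset.mem_Icc, mem_range] at hp
    have : p.1 - p.2 + p.2 = p.1 := by omega
    exact Sigma.ext this (by simp)
  · intro q hq
    have : q.1 + q.2 - q.2 = q.1 := by omega
    exact Sigma.ext this (by simp)
  · intro p hp
    rw [Finset.mem_sigma, Finset.mem_Icc, mem_range] at hp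
    simp only
    rw [show n - (p.1 - p.2) - p.2 = n - p.1 by omega,
        show k - (p.1 - p.2) - p.2 = k - p.1 by omega]
    ring

/-- For `n ≥ 1` and `1 ≤ k ≤ n`, `S₂(n,k) = (1/k!) ∑_{j=1}^k C(n-j,k-j)·A(n,j-1)`,
where `A(n,j)` are the Eulerian numbers and `S₂` the Stirling numbers of the second kind. -/
theorem stirling_eq_sum_eulerian (A : ℕ → ℕ → ℤ)
    (hA : ∀ n k, A n k = ∑ i ∈ range (k + 1),
      (-1 : ℤ) ^ i * ((n + 1).choose i : ℤ) * ((k + 1 - i : ℕ) : ℤ) ^ n)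
    (S2 : ℕ → ℕ → ℚ)
    (hS2 : ∀ n, (X : ℚ[X]) ^ n = ∑ k ∈ range (n + 1), S2 n k • descPochhammer ℚ k)
    (n k : ℕ) (hn : 1 ≤ n) (hk1 : 1 ≤ k) (hk : k ≤ n) :
    S2 n k
      = (k.factorial : ℚ)⁻¹ *
          ∑ j ∈ Finset.Icc 1 k, ((n - j).choose (k - j) : ℚ) * (A n (j - 1) : ℚ) := by
  -- Step 1: evaluation of hS2 at natural numbers
  have heval : ∀ m : ℕ, (m : ℚ) ^ n = ∑ j ∈ range (n + 1), S2 n j * (m.descFactorial j : ℚ) := by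
    intro m
    have h := congrArg (Polynomial.eval (m : ℚ)) (hS2 n)
    simpa only [eval_pow, eval_X, eval_finset_sum, eval_smul, smul_eq_mul,
      descPochhammer_eval_eq_descFactorial] using h
  -- Step 2: binomial inversion
  have hinv : ∑ m ∈ range (k + 1), (-1 : ℚ) ^ (k - m) * (k.choose m : ℚ) * (m : ℚ) ^ n
      = (k.factorial : ℚ) * S2 n k := by
    have step1 : ∀ m ∈ range (k + 1),
        (-1 : ℚ) ^ (k - m) * (k.choose m : ℚ) * (m : ℚ) ^ n
          = ∑ j ∈ range (n + 1),
              (-1 : ℚ) ^ (k - m) * (k.choose m : ℚ) * (S2 n j * (m.descFactorial j : ℚ)) := by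
      intro m _
      rw [heval m, Finset.mul_sum]
    rw [Finset.sum_congr rfl step1, Finset.sum_comm]
    have step2 : ∀ j ∈ range (n + 1),
        ∑ m ∈ range (k + 1),
            (-1 : ℚ) ^ (k - m) * (k.choose m : ℚ) * (S2 n j * (m.descFactorial j : ℚ))
          = if j = k then (k.factorial : ℚ) * S2 n k else 0 := by
      intro j hj
      have hterm : ∀ m ∈ range (k + 1),
          (-1 : ℚ) ^ (k - m) * (k.choose m : ℚ) * (S2 n j * (m.descFactorial j : ℚ))
            = (S2 n j * (j.factorial : ℚ)) *
                ((-1 : ℚ) ^ (k - m) * (k.choose m : ℚ) * (m.choose j : ℚ)) := by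
        intro m _
        rw [Nat.descFactorial_eq_factorial_mul_choose]
        push_cast
        ring
      rw [Finset.sum_congr rfl hterm, ← Finset.mul_sum, aux_inv k j]
      split_ifs with h
      · subst h; rw [mul_one, mul_comm]
      · rw [mul_zero]
    rw [Finset.sum_congr rfl step2, Finset.sum_ite_eq' (range (n + 1)) k
      (fun _ => (k.factorial : ℚ) * S2 n k), if_pos (mem_range.mpr (by omega))]
  -- Step 3: rewrite A and use the integer identity
  have hAj : ∀ j ∈ Finset.Icc 1 k, ((n - j).choose (k - j) : ℚ) * (A n (j - 1) : ℚ)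
      = ((n - j).choose (k - j) : ℚ) *
          ((∑ i ∈ range j, (-1 : ℤ) ^ i * ((n + 1).choose i : ℤ) * ((j - i : ℕ) : ℤ) ^ n : ℤ) : ℚ) := by
    intro j hj
    rw [Finset.mem_Icc] at hj
    have hAval : A n (j - 1)
        = ∑ i ∈ range j, (-1 : ℤ) ^ i * ((n + 1).choose i : ℤ) * ((j - i : ℕ) : ℤ) ^ n := by
      rw [hA n (j - 1), show j - 1 + 1 = j by omega]
    rw [hAval]
  rw [Finset.sum_congr rfl hAj]
  have hZ := aux_main n k hn hk1 hk
  have hQ := congrArg (Int.cast : ℤ → ℚ) hZ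
  push_cast at hQ
  rw [eq_comm, inv_mul_eq_iff_eq_mul₀ (by exact_mod_cast k.factorial_ne_zero)]
  rw [← hinv, ← hQ]
  push_cast
  rfl
end

section
/- For the Mittag-Leffler-type identity: for all n ≥ k ≥ 0, the coefficient of (x)_k in the expansion of the polynomial with exponential generating function ((1+t)/(1-t))^x is 2^k·L(n,k); i.e., if M_n(x) are defined by ∑_n M_n(x) t^n/n! = ((1+t)/(1-t))^x, then M_n(x) = ∑_{k=0}^{n} 2^k L(n,k)·(x)_k. -/
open Polynomial Finset

namespace MLaux

/-- Unsigned Lah numbers, defined recursively. -/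
def lah : ℕ → ℕ → ℚ
  | 0, 0 => 1
  | 0, _+1 => 0
  | _+1, 0 => 0
  | n+1, k+1 => lah n k + ((n : ℚ) + (k : ℚ) + 1) * lah n (k+1)

@[simp] lemma lah_zero_zero : lah 0 0 = 1 := rfl
@[simp] lemma lah_zero_succ (k : ℕ) : lah 0 (k+1) = 0 := rfl
@[simp] lemma lah_succ_zero (n : ℕ) : lah (n+1) 0 = 0 := rfl
lemma lah_succ_succ (n k : ℕ) :
    lah (n+1) (k+1) = lah n k + ((n : ℚ) + (k : ℚ) + 1) * lah n (k+1) := rfl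

lemma lah_eq_zero_of_lt : ∀ {n k : ℕ}, n < k → lah n k = 0 := by
  intro n
  induction n with
  | zero => intro k h; match k, h with | k+1, _ => rfl
  | succ n ih =>
      intro k h
      match k, h with
      | k+1, h =>
        rw [lah_succ_succ, ih (by omega), ih (by omega)]
        ring

lemma lah_H : ∀ n k : ℕ, ((n : ℚ) - k) * lah n k = (k : ℚ) * ((k : ℚ) + 1) * lah n (k+1) := by
  intro n
  induction n with
  | zero =>
      intro k
      cases k with
      | zero => simp
      | succ k => rw [lah_zero_succ, lah_eq_zero_of_lt (by omega)]; ring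
  | succ n ih =>
      intro k
      cases k with
      | zero => simp
      | succ k =>
        have ih1 := ih k
        have ih2 := ih (k+1)
        rw [lah_succ_succ, lah_succ_succ]
        push_cast at ih1 ih2 ⊢
        linear_combination ih1 + ((n : ℚ) + (k : ℚ) + 2) * ih2

lemma lah_I2 (n k : ℕ) : ((n : ℚ) + 1 - k) * lah (n+1) k = ((n : ℚ) + 1) * n * lah n k := by
  cases k with
  | zero =>
      cases n with
      | zero => simp
      | succ m => simp
  | succ k =>
      have h := lah_H n k
      rw [lah_succ_succ]
      push_cast at h ⊢
      linear_combination h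

/-- three-term identity used for the recurrence of T. -/
lemma lah_key (n k : ℕ) :
    lah (n+2) (k+1) = lah (n+1) k + 2 * ((k : ℚ) + 1) * lah (n+1) (k+1)
      + ((n : ℚ) + 1) * n * lah n (k+1) := by
  have h := lah_I2 n (k+1)
  rw [show n+2 = (n+1)+1 from rfl, lah_succ_succ]
  push_cast at h ⊢
  linear_combination h


lemma X_mul_desc (k : ℕ) : (X : ℚ[X]) * descPochhammer ℚ k
    = descPochhammer ℚ (k+1) + (k : ℚ) • descPochhammer ℚ k := by
  rw [descPochhammer_succ_right, smul_eq_C_mul, C_eq_natCast]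
  ring

lemma ascExpand (n : ℕ) :
    ascPochhammer ℚ n = ∑ k ∈ range (n+1), lah n k • descPochhammer ℚ k := by
  induction n with
  | zero => simp
  | succ n ih =>
      rw [ascPochhammer_succ_right, ih, Finset.sum_mul]
      have h1 : ∀ k : ℕ, lah n k • descPochhammer ℚ k * (X + (n : ℚ[X]))
          = lah n k • descPochhammer ℚ (k+1)
            + (((k : ℚ) + n) * lah n k) • descPochhammer ℚ k := by
        intro k
        have := X_mul_desc k
        rw [mul_add, mul_comm _ (X : ℚ[X]), mul_smul_comm, this]
        simp only [smul_eq_C_mul, map_add, map_mul, map_natCast]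
        push_cast
        ring
      rw [Finset.sum_congr rfl (fun k _ => h1 k), Finset.sum_add_distrib]
      -- second sum: reindex
      have h2 : ∑ k ∈ range (n+1), (((k : ℚ) + n) * lah n k) • descPochhammer ℚ k
          = ∑ k ∈ range (n+1), ((((k : ℚ) + 1) + n) * lah n (k+1)) • descPochhammer ℚ (k+1) := by
        rw [Finset.sum_range_succ' (fun k => (((k : ℚ) + n) * lah n k) • descPochhammer ℚ k) n]
        have hz : (((0 : ℕ) : ℚ) + n) * lah n 0 = 0 := by
          cases n with
          | zero => simp
          | succ m => simp
        rw [hz, zero_smul, add_zero]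
        rw [Finset.sum_range_succ]
        rw [lah_eq_zero_of_lt (by omega : n < n + 1), mul_zero, zero_smul, add_zero]
        exact Finset.sum_congr rfl (fun k _ => by push_cast; ring_nf)
      rw [h2, ← Finset.sum_add_distrib]
      rw [Finset.sum_range_succ' (fun k => lah (n+1) k • descPochhammer ℚ k) (n+1)]
      rw [lah_succ_zero, zero_smul, add_zero]
      refine Finset.sum_congr rfl (fun k _ => ?_)
      rw [lah_succ_succ, ← add_smul]
      congr 1
      push_cast
      ring


lemma desc_indep : ∀ (N : ℕ) (c : ℕ → ℚ),
    (∑ k ∈ range N, c k • descPochhammer ℚ k) = 0 → ∀ k < N, c k = 0 := by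
  intro N
  induction N with
  | zero => intro c _ k hk; omega
  | succ N ih =>
      intro c h k hk
      have htop : c N = 0 := by
        have h' := congrArg (fun p : ℚ[X] => p.coeff N) h
        simp only [finset_sum_coeff, coeff_smul, coeff_zero] at h'
        rw [Finset.sum_range_succ] at h'
        rw [Finset.sum_eq_zero (fun i hi => ?_)] at h'
        · have hmon : (descPochhammer ℚ N).coeff N = 1 := by
            have := (monic_descPochhammer ℚ N)
            have hd := descPochhammer_natDegree (R := ℚ) N
            have h2 := this.coeff_natDegree
            rwa [hd] at h2
          rw [hmon] at h'
          simpa using h'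
        · have : (descPochhammer ℚ i).coeff N = 0 := by
            apply coeff_eq_zero_of_natDegree_lt
            rw [descPochhammer_natDegree]
            exact mem_range.mp hi
          rw [this, smul_zero]
      rcases Nat.lt_succ_iff_lt_or_eq.mp hk with hk' | rfl
      · apply ih c ?_ k hk'
        rw [Finset.sum_range_succ, htop, zero_smul, add_zero] at h
        exact h
      · exact htop

lemma desc_sum_inj {N : ℕ} {c d : ℕ → ℚ}
    (h : ∑ k ∈ range N, c k • descPochhammer ℚ k = ∑ k ∈ range N, d k • descPochhammer ℚ k) :
    ∀ k < N, c k = d k := by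
  intro k hk
  have h0 : ∑ k ∈ range N, (c k - d k) • descPochhammer ℚ k = 0 := by
    simp only [sub_smul, Finset.sum_sub_distrib, h, sub_self]
  have := desc_indep N (fun k => c k - d k) h0 k hk
  linarith [this]


lemma inv_fac_smul_natCast (n : ℕ) (q : ℚ[X]) :
    ((n+1).factorial : ℚ)⁻¹ • (q * (((n+1 : ℕ) : ℚ[X]))) = (n.factorial : ℚ)⁻¹ • q := by
  have h1 : (((n+1 : ℕ) : ℚ[X])) = Polynomial.C (((n+1 : ℕ) : ℚ)) := by
    simp
  rw [h1, mul_comm, ← Polynomial.smul_eq_C_mul, smul_smul]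
  congr 1
  rw [Nat.factorial_succ]
  have h2 : (n.factorial : ℚ) ≠ 0 := Nat.cast_ne_zero.mpr n.factorial_ne_zero
  have h3 : ((n : ℚ) + 1) ≠ 0 := by positivity
  push_cast
  field_simp

lemma coeff_derivativeFun' (f : PowerSeries ℚ[X]) (n : ℕ) :
    PowerSeries.coeff n (PowerSeries.derivativeFun f) = PowerSeries.coeff (n + 1) f * (n + 1) :=
  PowerSeries.coeff_derivative f n

noncomputable def Aser : PowerSeries ℚ[X] :=
  PowerSeries.mk fun k => (k.factorial : ℚ)⁻¹ • descPochhammer ℚ k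

noncomputable def Bser : PowerSeries ℚ[X] :=
  PowerSeries.mk fun k => (k.factorial : ℚ)⁻¹ • ascPochhammer ℚ k

lemma fA : (1 + PowerSeries.X) * PowerSeries.derivativeFun Aser
    = PowerSeries.C (R := ℚ[X]) Polynomial.X * Aser := by
  refine PowerSeries.ext fun n => ?_
  rw [add_mul, one_mul, map_add, PowerSeries.coeff_C_mul, coeff_derivativeFun']
  cases n with
  | zero =>
      rw [PowerSeries.coeff_zero_X_mul, add_zero]
      simp [Aser, descPochhammer_one]
  | succ n =>
      rw [PowerSeries.coeff_succ_X_mul, coeff_derivativeFun']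
      simp only [Aser, PowerSeries.coeff_mk]
      have e1 : ((n+1).factorial : ℚ)⁻¹ • descPochhammer ℚ (n+1) * ((n : ℚ[X]) + 1)
          = (n.factorial : ℚ)⁻¹ • descPochhammer ℚ (n+1) := by
        rw [smul_mul_assoc, ← inv_fac_smul_natCast n (descPochhammer ℚ (n+1))]
        norm_cast
      have e2 : ((n+2).factorial : ℚ)⁻¹ • descPochhammer ℚ (n+2) * (((n+1 : ℕ) : ℚ[X]) + 1)
          = ((n+1).factorial : ℚ)⁻¹ • descPochhammer ℚ (n+2) := by
        rw [smul_mul_assoc, ← inv_fac_smul_natCast (n+1) (descPochhammer ℚ (n+2))]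
        norm_cast
      rw [show n+1+1 = n+2 from rfl, e2]
      rw [descPochhammer_succ_right ℚ (n+1)]
      have e3 : ((n+1).factorial : ℚ)⁻¹ • (descPochhammer ℚ (n+1) * ((X : ℚ[X]) - ((n+1 : ℕ) : ℚ[X])))
          = ((n+1).factorial : ℚ)⁻¹ • (descPochhammer ℚ (n+1) * (X : ℚ[X]))
            - (n.factorial : ℚ)⁻¹ • descPochhammer ℚ (n+1) := by
        rw [mul_sub, smul_sub, inv_fac_smul_natCast n (descPochhammer ℚ (n+1))]
      rw [e3, e1]
      rw [Polynomial.smul_eq_C_mul, Polynomial.smul_eq_C_mul, Polynomial.smul_eq_C_mul]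
      ring

lemma fB : (1 - PowerSeries.X) * PowerSeries.derivativeFun Bser
    = PowerSeries.C (R := ℚ[X]) Polynomial.X * Bser := by
  refine PowerSeries.ext fun n => ?_
  rw [sub_mul, one_mul, map_sub, PowerSeries.coeff_C_mul, coeff_derivativeFun']
  cases n with
  | zero =>
      rw [PowerSeries.coeff_zero_X_mul, sub_zero]
      simp [Bser, ascPochhammer_one]
  | succ n =>
      rw [PowerSeries.coeff_succ_X_mul, coeff_derivativeFun']
      simp only [Bser, PowerSeries.coeff_mk]
      have e1 : ((n+2).factorial : ℚ)⁻¹ • ascPochhammer ℚ (n+2) * (((n+1 : ℕ) : ℚ[X]) + 1)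
          = ((n+1).factorial : ℚ)⁻¹ • ascPochhammer ℚ (n+2) := by
        rw [smul_mul_assoc, ← inv_fac_smul_natCast (n+1) (ascPochhammer ℚ (n+2))]
        norm_cast
      rw [show n+1+1 = n+2 from rfl, e1]
      rw [ascPochhammer_succ_right ℚ (n+1)]
      have e3 : ((n+1).factorial : ℚ)⁻¹ • (ascPochhammer ℚ (n+1) * ((X : ℚ[X]) + ((n+1 : ℕ) : ℚ[X])))
          = ((n+1).factorial : ℚ)⁻¹ • (ascPochhammer ℚ (n+1) * (X : ℚ[X]))
            + (n.factorial : ℚ)⁻¹ • ascPochhammer ℚ (n+1) := by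
        rw [mul_add, smul_add, inv_fac_smul_natCast n (ascPochhammer ℚ (n+1))]
      rw [e3]
      have e4 : ((n+1).factorial : ℚ)⁻¹ • ascPochhammer ℚ (n+1) * ((n : ℚ[X]) + 1)
          = (n.factorial : ℚ)⁻¹ • ascPochhammer ℚ (n+1) := by
        rw [smul_mul_assoc, ← inv_fac_smul_natCast n (ascPochhammer ℚ (n+1))]
        norm_cast
      rw [e4]
      rw [Polynomial.smul_eq_C_mul, Polynomial.smul_eq_C_mul, Polynomial.smul_eq_C_mul]
      ring

lemma seriesODE : (1 - PowerSeries.X ^ 2) * PowerSeries.derivativeFun (Aser * Bser)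
    = 2 * PowerSeries.C (R := ℚ[X]) Polynomial.X * (Aser * Bser) := by
  have hmul := PowerSeries.derivativeFun_mul Aser Bser
  rw [smul_eq_mul, smul_eq_mul] at hmul
  rw [hmul]
  linear_combination ((1 - PowerSeries.X) * Bser) * fA + ((1 + PowerSeries.X) * Aser) * fB




noncomputable def Tpoly (n : ℕ) : ℚ[X] :=
  ∑ k ∈ range (n+1), ((2:ℚ)^k * lah n k) • descPochhammer ℚ k

lemma Trec (n : ℕ) : Tpoly (n+2)
    = 2 * X * Tpoly (n+1) + (((n:ℚ)+1) * n) • Tpoly n := by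
  have lhs_eq : Tpoly (n+2)
      = ∑ k ∈ range (n+2), (((2:ℚ)^(k+1) * lah (n+1) k) • descPochhammer ℚ (k+1)
          + ((2:ℚ)^(k+1) * (2*((k:ℚ)+1)) * lah (n+1) (k+1)) • descPochhammer ℚ (k+1)
          + ((2:ℚ)^(k+1) * ((((n:ℚ)+1))*n) * lah n (k+1)) • descPochhammer ℚ (k+1)) := by
    rw [Tpoly, Finset.sum_range_succ'
      (fun k => ((2:ℚ)^k * lah (n+2) k) • descPochhammer ℚ k) (n+2)]
    rw [lah_succ_zero, mul_zero, zero_smul, add_zero]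
    refine Finset.sum_congr rfl (fun k _ => ?_)
    rw [lah_key n k, ← add_smul, ← add_smul]
    congr 1
    push_cast
    ring
  rw [lhs_eq, Finset.sum_add_distrib, Finset.sum_add_distrib]
  -- piece 1 : the first two sums come from 2 * X * Tpoly (n+1)
  have p1 : 2 * (X : ℚ[X]) * Tpoly (n+1)
      = ∑ k ∈ range (n+2), ((2:ℚ)^(k+1) * lah (n+1) k) • descPochhammer ℚ (k+1)
        + ∑ k ∈ range (n+2),
            ((2:ℚ)^(k+1) * (2*((k:ℚ)+1)) * lah (n+1) (k+1)) • descPochhammer ℚ (k+1) := by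
    have step : ∀ k : ℕ, 2 * (X:ℚ[X]) * (((2:ℚ)^k * lah (n+1) k) • descPochhammer ℚ k)
        = ((2:ℚ)^(k+1) * lah (n+1) k) • descPochhammer ℚ (k+1)
          + ((2:ℚ)^(k+1) * (k:ℚ) * lah (n+1) k) • descPochhammer ℚ k := by
      intro k
      rw [descPochhammer_succ_right ℚ k]
      simp only [Polynomial.smul_eq_C_mul, map_mul, map_pow, map_natCast, map_ofNat]
      push_cast
      ring
    rw [Tpoly, Finset.mul_sum, Finset.sum_congr rfl (fun k _ => step k),
      Finset.sum_add_distrib]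
    congr 1
    -- reindex the second part
    rw [Finset.sum_range_succ'
      (fun k => ((2:ℚ)^(k+1) * (k:ℚ) * lah (n+1) k) • descPochhammer ℚ k) (n+1)]
    simp only [Nat.cast_zero, mul_zero, zero_mul, zero_smul, add_zero]
    rw [Finset.sum_range_succ
      (fun k => ((2:ℚ)^(k+1) * (2*((k:ℚ)+1)) * lah (n+1) (k+1)) • descPochhammer ℚ (k+1)) (n+1)]
    rw [lah_eq_zero_of_lt (show n+1 < n+1+1 by omega), mul_zero, zero_smul, add_zero]
    refine Finset.sum_congr rfl (fun k _ => ?_)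
    congr 1
    push_cast
    ring
  -- piece 3
  have p3 : ((((n:ℚ)+1))*n) • Tpoly n
      = ∑ k ∈ range (n+2),
          ((2:ℚ)^(k+1) * ((((n:ℚ)+1))*n) * lah n (k+1)) • descPochhammer ℚ (k+1) := by
    rw [Tpoly, Finset.smul_sum]
    rw [Finset.sum_range_succ'
      (fun k => ((((n:ℚ)+1))*n) • (((2:ℚ)^k * lah n k) • descPochhammer ℚ k)) n]
    have hz : ((((n:ℚ)+1))*n) • (((2:ℚ)^0 * lah n 0) • descPochhammer ℚ 0) = 0 := by
      cases n with
      | zero => simp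
      | succ m => simp
    rw [hz, add_zero]
    rw [Finset.sum_range_succ
      (fun k => ((2:ℚ)^(k+1) * ((((n:ℚ)+1))*n) * lah n (k+1)) • descPochhammer ℚ (k+1)) (n+1)]
    rw [lah_eq_zero_of_lt (show n < n+1+1 by omega), mul_zero, zero_smul, add_zero]
    rw [Finset.sum_range_succ
      (fun k => ((2:ℚ)^(k+1) * ((((n:ℚ)+1))*n) * lah n (k+1)) • descPochhammer ℚ (k+1)) n]
    rw [lah_eq_zero_of_lt (show n < n+1 by omega), mul_zero, zero_smul, add_zero]
    refine Finset.sum_congr rfl (fun k _ => ?_)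
    rw [smul_smul]
    congr 1
    ring
  rw [p1, p3]

lemma Tzero : Tpoly 0 = 1 := by
  simp [Tpoly]

lemma Tone : Tpoly 1 = 2 * X := by
  rw [Tpoly]
  rw [Finset.sum_range_succ, Finset.sum_range_succ, Finset.sum_range_zero]
  rw [show lah 1 0 = 0 from rfl, show lah 1 1 = 1 from by norm_num [lah],
    descPochhammer_one, descPochhammer_zero]
  simp only [pow_zero, pow_one, one_mul, mul_one, mul_zero, zero_smul, zero_add]
  rw [Polynomial.smul_eq_C_mul, map_ofNat]

lemma Ttwo : Tpoly 2 = 4 * X^2 := by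
  have h2 : descPochhammer ℚ 2 = X * (X - 1) := by
    rw [show (2:ℕ) = 1+1 from rfl, descPochhammer_succ_right, descPochhammer_one]
    push_cast
    ring
  rw [Tpoly]
  rw [Finset.sum_range_succ, Finset.sum_range_succ, Finset.sum_range_succ, Finset.sum_range_zero]
  rw [show lah 2 0 = 0 from rfl, show lah 2 1 = 2 from by norm_num [lah],
    show lah 2 2 = 1 from by norm_num [lah], h2, descPochhammer_one, descPochhammer_zero]
  rw [Polynomial.smul_eq_C_mul, Polynomial.smul_eq_C_mul, Polynomial.smul_eq_C_mul]
  norm_num [map_ofNat]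
  ring


lemma fac_mul_inv (n : ℕ) :
    ((n+2).factorial : ℚ) * ((n.factorial : ℚ))⁻¹ = ((n:ℚ)+2) * ((n:ℚ)+1) := by
  have h2 : (n.factorial : ℚ) ≠ 0 := Nat.cast_ne_zero.mpr n.factorial_ne_zero
  rw [show n+2 = (n+1)+1 from rfl, Nat.factorial_succ, Nat.factorial_succ]
  push_cast
  field_simp
  ring

lemma Mrec (M : ℕ → ℚ[X])
    (hF : ∀ m, PowerSeries.coeff (R := ℚ[X]) m (Aser * Bser) = (m.factorial : ℚ)⁻¹ • M m)
    (n : ℕ) :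
    M (n+3) = 2 * X * M (n+2) + ((((n:ℚ)+2) * ((n:ℚ)+1))) • M (n+1) := by
  have hC : (2 : PowerSeries ℚ[X]) * PowerSeries.C (R := ℚ[X]) Polynomial.X
      = PowerSeries.C (R := ℚ[X]) (2 * Polynomial.X) := by
    rw [map_mul, map_ofNat]
  have hs := seriesODE
  rw [hC] at hs
  have h := congrArg (PowerSeries.coeff (R := ℚ[X]) (n+2)) hs
  simp only [sub_mul, one_mul, map_sub] at h
  rw [PowerSeries.coeff_X_pow_mul (PowerSeries.derivativeFun (Aser * Bser)) 2 n] at h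
  rw [coeff_derivativeFun', coeff_derivativeFun',
    PowerSeries.coeff_C_mul] at h
  rw [hF, hF, hF] at h
  have e1 := inv_fac_smul_natCast (n+2) (M (n+3))
  have e2 := inv_fac_smul_natCast n (M (n+1))
  rw [smul_mul_assoc, smul_mul_assoc] at h
  push_cast at h e1 e2
  norm_num at h e1 e2
  rw [e1, e2] at h
  have hfac : ((n+2).factorial : ℚ) ≠ 0 := Nat.cast_ne_zero.mpr (n+2).factorial_ne_zero
  have h' := congrArg (fun p : ℚ[X] => ((n+2).factorial : ℚ) • p) h
  simp only [smul_sub, smul_smul, mul_inv_cancel₀ hfac, one_smul] at h'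
  rw [fac_mul_inv] at h'
  exact eq_add_of_sub_eq h'

end MLaux

open MLaux

/-- If `M_n(x)` are the Mittag-Leffler polynomials, with exponential generating function
`∑ M_n(x) t^n/n! = ((1+t)/(1-t))^x = (1+t)^x · (1/(1-t))^x`, where
`(1+t)^x = ∑_k (x)_k t^k/k!` and `(1-t)^{-x} = ∑_k ⟨x⟩_k t^k/k!`, then
`M_n(x) = ∑_{k=0}^n 2^k L(n,k) (x)_k`, where `L(n,k)` are the unsigned Lah numbers
defined by `⟨x⟩_n = ∑_k L(n,k) (x)_k`. -/
theorem mittagLeffler_eq_sum_lah (L : ℕ → ℕ → ℚ)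
    (hL : ∀ n, ascPochhammer ℚ n = ∑ k ∈ range (n + 1), L n k • descPochhammer ℚ k)
    (M : ℕ → ℚ[X])
    (hM : PowerSeries.mk (fun n => (n.factorial : ℚ)⁻¹ • M n)
        = PowerSeries.mk (fun k => (k.factorial : ℚ)⁻¹ • descPochhammer ℚ k) *
            PowerSeries.mk (fun k => (k.factorial : ℚ)⁻¹ • ascPochhammer ℚ k))
    (n : ℕ) :
    M n = ∑ k ∈ range (n + 1), ((2 : ℚ) ^ k * L n k) • descPochhammer ℚ k := by
  have hAB : PowerSeries.mk (fun n => (n.factorial : ℚ)⁻¹ • M n) = Aser * Bser := hM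
  have hF : ∀ m, PowerSeries.coeff (R := ℚ[X]) m (Aser * Bser) = (m.factorial : ℚ)⁻¹ • M m := by
    intro m
    rw [← hAB, PowerSeries.coeff_mk]
  have key : ∀ m, (m.factorial : ℚ)⁻¹ • M m
      = ∑ k ∈ range (m+1), ((k.factorial : ℚ)⁻¹ • descPochhammer ℚ k)
          * (((m-k).factorial : ℚ)⁻¹ • ascPochhammer ℚ (m-k)) := by
    intro m
    rw [← hF m, PowerSeries.coeff_mul, Finset.Nat.sum_antidiagonal_eq_sum_range_succ_mk]
    refine Finset.sum_congr rfl fun k _ => ?_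
    rw [show Aser = PowerSeries.mk (fun k => (k.factorial : ℚ)⁻¹ • descPochhammer ℚ k) from rfl,
      show Bser = PowerSeries.mk (fun k => (k.factorial : ℚ)⁻¹ • ascPochhammer ℚ k) from rfl,
      PowerSeries.coeff_mk, PowerSeries.coeff_mk]
  have hM0 : M 0 = Tpoly 0 := by
    have h := key 0
    rw [Finset.sum_range_succ, Finset.sum_range_zero] at h
    simp at h
    rw [Tzero, h]
  have hM1 : M 1 = Tpoly 1 := by
    have h := key 1
    rw [Finset.sum_range_succ, Finset.sum_range_succ, Finset.sum_range_zero] at h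
    simp [descPochhammer_one, ascPochhammer_one] at h
    rw [Tone]
    rw [h]
    ring
  have hM2 : M 2 = Tpoly 2 := by
    have h := key 2
    rw [Finset.sum_range_succ, Finset.sum_range_succ, Finset.sum_range_succ,
      Finset.sum_range_zero] at h
    have hd2 : descPochhammer ℚ 2 = X * (X - 1) := by
      rw [show (2:ℕ) = 1+1 from rfl, descPochhammer_succ_right, descPochhammer_one]
      push_cast
      ring
    have ha2 : ascPochhammer ℚ 2 = X * (X + 1) := by
      rw [show (2:ℕ) = 1+1 from rfl, ascPochhammer_succ_right, ascPochhammer_one]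
      push_cast
      ring
    rw [hd2, ha2] at h
    simp [descPochhammer_one, ascPochhammer_one, Nat.factorial] at h
    rw [Ttwo]
    have h2 : M 2 = (2:ℚ) • ((2:ℚ)⁻¹ • M 2) := by
      rw [smul_smul]
      norm_num
    rw [h2, h, smul_add, smul_add, smul_smul, smul_smul]
    norm_num
    rw [Polynomial.smul_eq_C_mul, map_ofNat]
    ring
  have main : ∀ m, M m = Tpoly m ∧ M (m+1) = Tpoly (m+1) ∧ M (m+2) = Tpoly (m+2) := by
    intro m
    induction m with
    | zero => exact ⟨hM0, hM1, hM2⟩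
    | succ m ih =>
        refine ⟨ih.2.1, ih.2.2, ?_⟩
        have hr := Mrec M hF m
        have tr := Trec (m+1)
        push_cast at tr
        show M (m+3) = Tpoly (m+3)
        rw [hr, ih.2.2, ih.2.1]
        rw [show ((m:ℕ)+1+2 : ℕ) = m+3 from rfl, show ((m:ℕ)+1+1 : ℕ) = m+2 from rfl,
          show ((m:ℚ)+1+1) = ((m:ℚ)+2) from by ring] at tr
        rw [tr]
  have hLlah : ∀ k, k < n+1 → L n k = lah n k :=
    desc_sum_inj ((hL n).symm.trans (ascExpand n))
  rw [(main n).1, Tpoly]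
  exact Finset.sum_congr rfl fun k hk => by rw [hLlah k (mem_range.mp hk)]
end
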